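/- For any two lists A and B, if L is a longest common subsequence of A and B (L is a sublist of both, |L| = lcsLen(A,B)), then d(A,B) ≤ d(A,L) + d(L,B). -/

import Mathlib

open List

noncomputable def H (n : ℕ) : ℝ := ∑ i ∈ Finset.range n, (1 : ℝ) / (i + 1)

noncomputable def lcsLen {α : Type*} (A B : List α) : ℕ :=
  sSup {n : ℕ | ∃ L : List α, L.Sublist A ∧ L.Sublist B ∧ L.length = n}

noncomputable def d {α : Type*} (A B : List α) : ℝ :=
  2 * H (A.length + B.length - lcsLen A B) - H A.length - H B.length

/-! The harmonic increments `H (n + s) - H n = ∑_{i<s} 1/(n+i+1)` decrease in `n`, so with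
`a = l + s` the gap `H (a + b - l) - H b` is at most `H a - H l`. This is exactly the triangle
inequality through a longest common subsequence, since `L` is its own longest common
subsequence with `A` and with `B`. -/

lemma H_add (n k : ℕ) : H (n + k) = H n + ∑ i ∈ Finset.range k, (1 : ℝ) / (n + i + 1) := by
  simp only [H, Finset.sum_range_add, Nat.cast_add]

lemma H_add_sub_H_antitone {m n : ℕ} (hmn : m ≤ n) (k : ℕ) :
    H (n + k) - H n ≤ H (m + k) - H m := by
  simp only [H_add, add_sub_cancel_left]
  gcongr

lemma H_add_sub_add_H_le {l a b : ℕ} (hla : l ≤ a) (hlb : l ≤ b) :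
    H (a + b - l) + H l ≤ H a + H b := by
  obtain ⟨s, rfl⟩ := Nat.exists_eq_add_of_le hla
  have hsub : l + s + b - l = b + s := by omega
  rw [hsub]
  linarith [H_add_sub_H_antitone hlb s]

lemma lcsLen_comm {α : Type*} (A B : List α) : lcsLen A B = lcsLen B A := by
  simp only [lcsLen, and_left_comm]

lemma lcsLen_eq_length_of_sublist {α : Type*} {A L : List α} (hA : L.Sublist A) :
    lcsLen A L = L.length := by
  refine csSup_eq_of_forall_le_of_forall_lt_exists_gt ⟨L.length, L, hA, Sublist.refl L, rfl⟩ ?_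
    fun n hn => ⟨L.length, ⟨L, hA, Sublist.refl L, rfl⟩, hn⟩
  rintro n ⟨M, -, hML, rfl⟩
  exact hML.length_le

lemma d_eq_of_sublist {α : Type*} {A L : List α} (hA : L.Sublist A) :
    d A L = H A.length - H L.length := by
  rw [d, lcsLen_eq_length_of_sublist hA, Nat.add_sub_cancel]
  ring

lemma d_comm {α : Type*} (A B : List α) : d A B = d B A := by
  rw [d, d, lcsLen_comm, Nat.add_comm]
  ring

theorem stmt12 {α : Type*} (A B L : List α) (hA : L.Sublist A) (hB : L.Sublist B)
    (hlen : L.length = lcsLen A B) : d A B ≤ d A L + d L B := by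
  rw [d_comm L B, d_eq_of_sublist hA, d_eq_of_sublist hB, d, ← hlen]
  linarith [H_add_sub_add_H_le hA.length_le hB.length_le]
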